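/- Consider the ordinary differential equation ẋ(t) = f(x(t)) where f : ℝⁿ → ℝⁿ is a polynomial vector field. Suppose there exist a polynomial v : ℝⁿ → ℝ, a constant ε > 0, a radius r > 0, and sum-of-squares polynomials s₁, s₂, t₁, t₂ : ℝⁿ → ℝ such that v(x) − s₁(x)(r − xᵀx) − s₂(x) − ε xᵀx = 0 and −∇v(x)ᵀ f(x) − t₁(x)(r − xᵀx) − t₂(x) − ε xᵀx = 0 identically. Then there exist constants μ, δ > 0 such that every solution x(·) with initial condition x₀ in Y(v,r), the largest sublevel set of v contained in the ball {x : xᵀx ≤ r}, satisfies ‖x(t)‖₂ ≤ μ‖x₀‖₂ e^{−δt} for all t ≥ 0. -/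

import Mathlib

/-- The squared Euclidean norm `xᵀx = ∑ₖ x_k²`. -/
def sqnorm (n : ℕ) (x : Fin n → ℝ) : ℝ := ∑ k, x k ^ 2

/-- The Euclidean norm `‖x‖₂ = √(xᵀx)`. -/
noncomputable def enorm2 (n : ℕ) (x : Fin n → ℝ) : ℝ := Real.sqrt (sqnorm n x)

/-- A polynomial is a sum of squares if it is `∑ᵢ gᵢ²` for some polynomials `gᵢ`. -/
def IsSOS {n : ℕ} (p : MvPolynomial (Fin n) ℝ) : Prop :=
  ∃ (K : ℕ) (g : Fin K → MvPolynomial (Fin n) ℝ), p = ∑ i, (g i) ^ 2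

/-- The polynomial `xᵀx = ∑ᵢ Xᵢ²`. -/
noncomputable def qpoly (n : ℕ) : MvPolynomial (Fin n) ℝ :=
  ∑ i, (MvPolynomial.X i) ^ 2

/-- `Y(v,r)`: the largest sublevel set of `v` contained in the ball
`{x : xᵀx ≤ r}`, i.e. the union of all sublevel sets of `v` contained in it. -/
def YSet (n : ℕ) (v : MvPolynomial (Fin n) ℝ) (r : ℝ) : Set (Fin n → ℝ) :=
  {x | ∃ c : ℝ, (∀ y : Fin n → ℝ, MvPolynomial.eval y v ≤ c → sqnorm n y ≤ r) ∧
    MvPolynomial.eval x v ≤ c}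

/-!
The origin is the global minimum of `v`: the sublevel set defining `Y(v,r)` is compact, and at
a minimiser `y` the gradient of `v` vanishes, so `ε ‖y‖² ≤ -∇v(y)ᵀ f(y) = 0`. Running the flow
from the origin (Picard–Lindelöf) cannot decrease `v` below this minimum, so `f(0) = 0`.
Sublevel sets of `v` inside the ball are forward invariant, since `v` strictly decreases wherever
a trajectory touches the sphere. Along a trajectory in the ball, `U = v - v(0)` satisfies
`0 ≤ U ≤ β ‖x‖²` and `U̇ ≤ -ε ‖x‖²`, while `d/dt ‖x‖² ≤ L ‖x‖²`; for small `κ` the function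
`U + κ ‖x‖²` is then comparable to `‖x‖²` and decays exponentially by Grönwall.
-/

open MvPolynomial Set Filter Topology

theorem MvPolynomial.hasDerivAt_eval_comp {𝕜 σ : Type*} [NontriviallyNormedField 𝕜] [Fintype σ]
    {x : 𝕜 → σ → 𝕜} {x' : σ → 𝕜} {t : 𝕜} (hx : HasDerivAt x x' t) (p : MvPolynomial σ 𝕜) :
    HasDerivAt (fun s => eval (x s) p) (∑ i, eval (x t) (pderiv i p) * x' i) t := by
  induction p using MvPolynomial.induction_on with
  | C a => simpa using hasDerivAt_const t a
  | add p q hp hq =>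
    simp only [map_add, add_mul, Finset.sum_add_distrib]
    exact hp.add hq
  | mul_X p i hp =>
    classical
    simp only [map_mul, eval_X, Derivation.leibniz, pderiv_X, smul_eq_mul, Pi.single_apply]
    refine (hp.mul (hasDerivAt_pi.1 hx i)).congr_deriv ?_
    simp only [mul_comm, add_comm, mul_ite, mul_one, mul_zero, map_add, apply_ite (eval (x t)),
      map_zero, map_mul, eval_X]
    simp [mul_add, Finset.sum_add_distrib, Finset.mul_sum, mul_left_comm]

theorem MvPolynomial.exists_eq_sum_mul_X_of_eval_zero {R σ : Type*} [CommRing R] [Fintype σ]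
    {p : MvPolynomial σ R} (hp : eval 0 p = 0) :
    ∃ q : σ → MvPolynomial σ R, p = ∑ i, q i * X i := by
  have hmem : p ∈ idealOfVars σ R := by
    rw [← pow_one (idealOfVars σ R), mem_pow_idealOfVars_iff']
    intro m hm
    rw [Nat.lt_one_iff, Finsupp.degree_eq_zero_iff] at hm
    rw [hm, ← hp, eval_zero, constantCoeff_eq]
  obtain ⟨q, hq⟩ := Ideal.mem_span_range_iff_exists_fun.1 hmem
  exact ⟨q, hq.symm⟩

theorem MvPolynomial.eval_zero_pderiv_sum_mul_X {R σ : Type*} [CommRing R] [Fintype σ]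
    (q : σ → MvPolynomial σ R) (j : σ) :
    eval 0 (pderiv j (∑ i, q i * X i)) = eval 0 (q j) := by
  classical
  simp [pderiv_X, Pi.single_apply, apply_ite]

theorem MvPolynomial.eval_pderiv_eq_zero_of_forall_le {σ : Type*} [Fintype σ]
    {p : MvPolynomial σ ℝ} {y : σ → ℝ} (hmin : ∀ z, eval y p ≤ eval z p) (i : σ) :
    eval y (pderiv i p) = 0 := by
  classical
  have hline : HasDerivAt (fun s : ℝ => y + s • Pi.single i 1) (Pi.single i 1) 0 := by
    simpa using ((hasDerivAt_id (0 : ℝ)).smul_const (Pi.single i (1 : ℝ))).const_add y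
  have hmin' : IsLocalMin (fun s : ℝ => eval (y + s • Pi.single i 1) p) 0 :=
    Eventually.of_forall fun s => by simpa using hmin _
  simpa [Pi.single_apply] using hmin'.hasDerivAt_eq_zero (hasDerivAt_eval_comp hline p)

section Euclidean

variable {n : ℕ}

theorem sqnorm_nonneg (x : Fin n → ℝ) : 0 ≤ sqnorm n x :=
  Finset.sum_nonneg fun i _ => sq_nonneg (x i)

theorem sq_le_sqnorm (x : Fin n → ℝ) (i : Fin n) : x i ^ 2 ≤ sqnorm n x :=
  Finset.single_le_sum (fun j _ => sq_nonneg (x j)) (Finset.mem_univ i)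

theorem eq_zero_of_sqnorm_eq_zero {x : Fin n → ℝ} (h : sqnorm n x = 0) : x = 0 :=
  funext fun i => pow_eq_zero_iff two_ne_zero |>.1 <|
    (Finset.sum_eq_zero_iff_of_nonneg fun j _ => sq_nonneg (x j)).1 h i (Finset.mem_univ i)

theorem abs_mul_le_sqnorm (x : Fin n → ℝ) (i j : Fin n) : |x i * x j| ≤ sqnorm n x := by
  rw [abs_mul, ← Real.mul_self_sqrt (sqnorm_nonneg x)]
  exact mul_le_mul (Real.abs_le_sqrt (sq_le_sqnorm x i)) (Real.abs_le_sqrt (sq_le_sqnorm x j))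
    (abs_nonneg _) (Real.sqrt_nonneg _)

theorem continuous_sqnorm : Continuous (sqnorm n) :=
  continuous_finsetSum _ fun i _ => (continuous_apply i).pow 2

theorem isCompact_sqnorm_le (r : ℝ) : IsCompact {x : Fin n → ℝ | sqnorm n x ≤ r} := by
  refine Metric.isCompact_of_isClosed_isBounded (isClosed_le continuous_sqnorm continuous_const) ?_
  refine (Metric.isBounded_iff_subset_closedBall 0).2 ⟨√r, fun x hx => ?_⟩
  rw [Metric.mem_closedBall, dist_zero_right, pi_norm_le_iff_of_nonneg (Real.sqrt_nonneg r)]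
  exact fun i => Real.abs_le_sqrt ((sq_le_sqnorm x i).trans hx)

theorem eval_qpoly (x : Fin n → ℝ) : eval x (qpoly n) = sqnorm n x := by
  simp [qpoly, sqnorm]

theorem IsSOS.eval_nonneg {p : MvPolynomial (Fin n) ℝ} (hp : IsSOS p) (x : Fin n → ℝ) :
    0 ≤ eval x p := by
  obtain ⟨K, g, rfl⟩ := hp
  simpa using Finset.sum_nonneg fun i _ => sq_nonneg (eval x (g i))

theorem mul_sqnorm_le_eval_of_sos {p t₁ t₂ : MvPolynomial (Fin n) ℝ} {ε r : ℝ}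
    (ht₁ : IsSOS t₁) (ht₂ : IsSOS t₂)
    (h : p - t₁ * (C r - qpoly n) - t₂ - C ε * qpoly n = 0) {x : Fin n → ℝ}
    (hx : sqnorm n x ≤ r) : ε * sqnorm n x ≤ eval x p := by
  have := congrArg (eval x) h
  simp only [map_sub, map_mul, eval_C, eval_qpoly, map_zero] at this
  nlinarith [mul_nonneg (ht₁.eval_nonneg x) (sub_nonneg.2 hx), ht₂.eval_nonneg x]

theorem hasDerivAt_sqnorm_comp {x : ℝ → Fin n → ℝ} {x' : Fin n → ℝ} {t : ℝ}
    (hx : HasDerivAt x x' t) :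
    HasDerivAt (fun s => sqnorm n (x s)) (2 * ∑ i, x' i * x t i) t := by
  refine (HasDerivAt.fun_sum (u := Finset.univ) fun i _ =>
    (hasDerivAt_pi.1 hx i).fun_pow 2).congr_deriv ?_
  simp [Finset.mul_sum, mul_comm, mul_left_comm, mul_assoc]

theorem enorm2_le_of_sqnorm_le {y z : Fin n → ℝ} {A δ t : ℝ} (hA : 0 ≤ A)
    (h : sqnorm n y ≤ A * sqnorm n z * Real.exp (-δ * t)) :
    enorm2 n y ≤ √A * enorm2 n z * Real.exp (-(δ / 2) * t) := by
  calc enorm2 n y ≤ √(A * sqnorm n z * Real.exp (-δ * t)) := Real.sqrt_le_sqrt h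
    _ = √A * enorm2 n z * Real.exp (-(δ / 2) * t) := by
      rw [Real.sqrt_mul (mul_nonneg hA (sqnorm_nonneg z)), Real.sqrt_mul hA, ← Real.exp_half,
        enorm2]
      ring_nf

theorem exists_abs_eval_le_mul_sqnorm {q : Fin n → MvPolynomial (Fin n) ℝ}
    (hq : ∀ i, eval 0 (q i) = 0) (r : ℝ) :
    ∃ β, 0 ≤ β ∧ ∀ x, sqnorm n x ≤ r → |eval x (∑ i, q i * X i)| ≤ β * sqnorm n x := by
  choose Q hQ using fun i => exists_eq_sum_mul_X_of_eval_zero (hq i)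
  obtain ⟨M, hM⟩ := (isCompact_sqnorm_le r).exists_bound_of_continuousOn
    (f := fun x => ∑ i, ∑ j, |eval x (Q i j)|)
    (continuous_finsetSum _ fun i _ => continuous_finsetSum _ fun j _ =>
      (continuous_eval (Q i j)).abs).continuousOn
  refine ⟨max M 0, le_max_right _ _, fun x hx => ?_⟩
  have hsum : ∑ i, ∑ j, |eval x (Q i j)| ≤ max M 0 :=
    (le_abs_self _).trans ((hM x hx).trans (le_max_left _ _))
  calc |eval x (∑ i, q i * X i)|
      = |∑ i, ∑ j, eval x (Q i j) * (x j * x i)| := by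
        simp [hQ, Finset.sum_mul, mul_assoc]
    _ ≤ ∑ i, ∑ j, |eval x (Q i j)| * sqnorm n x := by
        refine (Finset.abs_sum_le_sum_abs _ _).trans (Finset.sum_le_sum fun i _ => ?_)
        refine (Finset.abs_sum_le_sum_abs _ _).trans (Finset.sum_le_sum fun j _ => ?_)
        rw [abs_mul]
        exact mul_le_mul_of_nonneg_left (abs_mul_le_sqnorm x j i) (abs_nonneg _)
    _ ≤ max M 0 * sqnorm n x := by
        simp only [← Finset.sum_mul]
        exact mul_le_mul_of_nonneg_right hsum (sqnorm_nonneg x)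

theorem exists_abs_eval_sub_le_mul_sqnorm {p : MvPolynomial (Fin n) ℝ}
    (hp : ∀ i, eval 0 (pderiv i p) = 0) (r : ℝ) :
    ∃ β, 0 ≤ β ∧ ∀ x, sqnorm n x ≤ r → |eval x p - eval 0 p| ≤ β * sqnorm n x := by
  obtain ⟨q, hq⟩ := exists_eq_sum_mul_X_of_eval_zero (p := p - C (eval 0 p)) (by simp)
  have hq0 : ∀ i, eval 0 (q i) = 0 := fun i => by
    rw [← eval_zero_pderiv_sum_mul_X, ← hq, map_sub, pderiv_C, sub_zero, hp]
  obtain ⟨β, hβ, hbound⟩ := exists_abs_eval_le_mul_sqnorm hq0 r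
  exact ⟨β, hβ, fun x hx => by simpa [← hq] using hbound x hx⟩

end Euclidean

theorem le_mul_exp_of_hasDerivAt_le_mul {W W' : ℝ → ℝ} {K : ℝ}
    (hW : ∀ t ≥ 0, HasDerivAt W (W' t) t) (hW' : ∀ t ≥ 0, W' t ≤ K * W t) {t : ℝ} (ht : 0 ≤ t) :
    W t ≤ W 0 * Real.exp (K * t) := by
  simpa [gronwallBound_ε0] using le_gronwallBound_of_liminf_deriv_right_le (ε := 0)
    (fun s hs => (hW s hs.1).continuousAt.continuousWithinAt)
    (fun s hs _ hr => (hW s hs.1).hasDerivWithinAt.liminf_right_slope_le hr)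
    le_rfl (fun s hs => by simpa using hW' s hs.1) t ⟨ht, le_rfl⟩

theorem image_le_of_deriv_nonpos_of_deriv_neg_boundary {φ φ' ρ : ℝ → ℝ} {a b c r : ℝ}
    (hφ : ∀ t ∈ Icc a b, HasDerivAt φ (φ' t) t) (hρ : ContinuousOn ρ (Icc a b))
    (hsub : ∀ t ∈ Icc a b, φ t ≤ c → ρ t ≤ r)
    (hnonpos : ∀ t ∈ Icc a b, ρ t ≤ r → φ' t ≤ 0)
    (hneg : ∀ t ∈ Icc a b, ρ t = r → φ' t < 0)
    (ha : φ a ≤ c) : ∀ t ∈ Icc a b, φ t ≤ c := by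
  have hφc : ContinuousOn φ (Icc a b) := fun t ht => (hφ t ht).continuousAt.continuousWithinAt
  refine fun t ht => IsClosed.Icc_subset_of_forall_mem_nhdsWithin (s := {t | φ t ≤ c}) ?_ ha ?_ ht
  · rw [inter_comm]
    exact hφc.preimage_isClosed_of_isClosed isClosed_Icc isClosed_Iic
  rintro t ⟨hφt, hat, htb⟩
  have htI : t ∈ Icc a b := ⟨hat, htb.le⟩
  rcases (hsub t htI hφt).lt_or_eq with hlt | heq
  · have hρt : ∀ᶠ u in 𝓝[≥] t, ρ u < r := by
      rw [← nhdsWithin_Ico_eq_nhdsGE htb]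
      exact ((hρ t htI).mono (Icc_subset_Icc_left hat |>.trans' Ico_subset_Icc_self)).eventually
        (gt_mem_nhds hlt)
    obtain ⟨d, hd, hd_sub⟩ := mem_nhdsGE_iff_exists_Ico_subset.1 (hρt.and (Ico_mem_nhdsGE htb))
    have hmem : ∀ s ∈ Ico t d, s ∈ Icc a b ∧ ρ s < r := fun s hs =>
      ⟨⟨hat.trans (hd_sub hs).2.1, (hd_sub hs).2.2.le⟩, (hd_sub hs).1⟩
    filter_upwards [Ioo_mem_nhdsGT hd] with u hu
    refine image_le_of_deriv_right_le_deriv_boundary (B := fun _ => c) (B' := fun _ => 0)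
      (hφc.mono fun s hs => (hmem s ⟨hs.1, hs.2.trans_lt hu.2⟩).1)
      (fun s hs => (hφ s (hmem s ⟨hs.1, hs.2.trans hu.2⟩).1).hasDerivWithinAt)
      hφt continuousOn_const (fun _ _ => hasDerivWithinAt_const _ _ _)
      (fun s hs => ?_) ⟨hu.1.le, le_rfl⟩
    obtain ⟨hsI, hρs⟩ := hmem s ⟨hs.1, hs.2.trans hu.2⟩
    exact hnonpos s hsI hρs.le
  · filter_upwards [(hφ t htI).hasDerivWithinAt.limsup_slope_le' (lt_irrefl t) (hneg t htI heq),
      self_mem_nhdsWithin] with u hu htu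
    rw [slope_def_field, div_neg_iff] at hu
    have : φ u < φ t := by rcases hu with h | h <;> linarith [h.1, h.2, mem_Ioi.1 htu]
    exact this.le.trans hφt

theorem exists_le_mul_exp_of_lyapunov {ε β L : ℝ} (hε : 0 < ε) (hβ : 0 ≤ β) (hL : 0 ≤ L) :
    ∃ A δ : ℝ, 0 < A ∧ 0 < δ ∧ ∀ {U U' ρ ρ' : ℝ → ℝ},
      (∀ t ≥ 0, HasDerivAt U (U' t) t) → (∀ t ≥ 0, HasDerivAt ρ (ρ' t) t) →
      (∀ t ≥ 0, 0 ≤ U t ∧ U t ≤ β * ρ t) → (∀ t ≥ 0, 0 ≤ ρ t) →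
      (∀ t ≥ 0, U' t ≤ -(ε * ρ t)) → (∀ t ≥ 0, ρ' t ≤ L * ρ t) →
      ∀ t ≥ 0, ρ t ≤ A * ρ 0 * Real.exp (-δ * t) := by
  set κ := ε / (2 * (L + 1)) with hκ_def
  have hκ : 0 < κ := by positivity
  have hκL : κ * L ≤ ε / 2 := by
    rw [hκ_def, div_mul_eq_mul_div, div_le_div_iff₀ (by positivity) two_pos]
    nlinarith
  set δ := ε / (2 * (β + κ)) with hδ_def
  have hδ : δ * (β + κ) = ε / 2 := by
    rw [hδ_def]
    field_simp
  refine ⟨(β + κ) / κ, δ, by positivity, by positivity, ?_⟩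
  intro U U' ρ ρ' hU hρ hUρ hρ0 hU' hρ' t ht
  have hW : ∀ s ≥ 0, HasDerivAt (fun s => U s + κ * ρ s) (U' s + κ * ρ' s) s :=
    fun s hs => (hU s hs).add ((hρ s hs).const_mul κ)
  have hW' : ∀ s ≥ 0, U' s + κ * ρ' s ≤ -δ * (U s + κ * ρ s) := by
    intro s hs
    have h1 : κ * ρ' s ≤ κ * (L * ρ s) := mul_le_mul_of_nonneg_left (hρ' s hs) hκ.le
    have h2 : κ * L * ρ s ≤ ε / 2 * ρ s := mul_le_mul_of_nonneg_right hκL (hρ0 s hs)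
    have h3 : δ * (U s + κ * ρ s) ≤ δ * ((β + κ) * ρ s) := by
      gcongr
      linarith [(hUρ s hs).2]
    have h4 : δ * ((β + κ) * ρ s) = ε / 2 * ρ s := by rw [← mul_assoc, hδ]
    linarith [hU' s hs]
  have hW0 : U 0 + κ * ρ 0 ≤ (β + κ) * ρ 0 := by linarith [(hUρ 0 le_rfl).2]
  have hκρ : κ * ρ t ≤ (β + κ) * ρ 0 * Real.exp (-δ * t) :=
    calc κ * ρ t ≤ U t + κ * ρ t := by linarith [(hUρ t ht).1]
      _ ≤ (U 0 + κ * ρ 0) * Real.exp (-δ * t) := le_mul_exp_of_hasDerivAt_le_mul hW hW' ht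
      _ ≤ (β + κ) * ρ 0 * Real.exp (-δ * t) :=
        mul_le_mul_of_nonneg_right hW0 (Real.exp_pos _).le
  rw [div_mul_eq_mul_div, div_mul_eq_mul_div, le_div_iff₀ hκ]
  linarith

section Lyapunov

variable {n : ℕ} {P : Fin n → MvPolynomial (Fin n) ℝ} {v : MvPolynomial (Fin n) ℝ} {ε r : ℝ}

theorem hasDerivAt_eval_of_hasDerivAt {x : ℝ → Fin n → ℝ} {t : ℝ}
    (hx : HasDerivAt x (fun i => eval (x t) (P i)) t) (p : MvPolynomial (Fin n) ℝ) :
    HasDerivAt (fun s => eval (x s) p) (eval (x t) (∑ i, pderiv i p * P i)) t := by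
  simpa using hasDerivAt_eval_comp hx p

theorem eq_zero_of_forall_eval_le (hε : 0 < ε)
    (hdecr : ∀ x, sqnorm n x ≤ r → ε * sqnorm n x ≤ eval x (-(∑ i, pderiv i v * P i)))
    {y : Fin n → ℝ} (hy : ∀ z, eval y v ≤ eval z v)
    (hyr : sqnorm n y ≤ r) : y = 0 := by
  have h := hdecr y hyr
  simp only [map_neg, map_sum, map_mul, eval_pderiv_eq_zero_of_forall_le hy, zero_mul,
    Finset.sum_const_zero, neg_zero] at h
  exact eq_zero_of_sqnorm_eq_zero
    (le_antisymm (le_of_mul_le_mul_left (by simpa using h) hε) (sqnorm_nonneg y))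

theorem eval_zero_le_of_sublevel_subset_ball (hε : 0 < ε)
    (hdecr : ∀ x, sqnorm n x ≤ r → ε * sqnorm n x ≤ eval x (-(∑ i, pderiv i v * P i)))
    {c : ℝ} (hc : ∀ y, eval y v ≤ c → sqnorm n y ≤ r) {z : Fin n → ℝ}
    (hz : eval z v ≤ c) (y : Fin n → ℝ) : eval 0 v ≤ eval y v := by
  obtain ⟨y₀, hy₀, hmin⟩ := ((isCompact_sqnorm_le r).of_isClosed_subset
    (isClosed_le (continuous_eval v) continuous_const) hc).exists_isMinOn ⟨z, hz⟩
    (continuous_eval v).continuousOn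
  have hglob : ∀ y, eval y₀ v ≤ eval y v := fun y =>
    (le_or_gt (eval y v) c).elim (fun h => hmin h) fun h => hy₀.trans h.le
  rw [← eq_zero_of_forall_eval_le hε hdecr hglob (hc y₀ hy₀)]
  exact hglob y

theorem eval_comp_le_of_sublevel_subset_ball (hε : 0 < ε) (hr : 0 < r)
    (hdecr : ∀ x, sqnorm n x ≤ r → ε * sqnorm n x ≤ eval x (-(∑ i, pderiv i v * P i)))
    {c : ℝ} (hc : ∀ y, eval y v ≤ c → sqnorm n y ≤ r)
    {x : ℝ → Fin n → ℝ} {b : ℝ} (hx : ∀ t ∈ Icc 0 b, HasDerivAt x (fun i => eval (x t) (P i)) t)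
    (h0 : eval (x 0) v ≤ c) : ∀ t ∈ Icc 0 b, eval (x t) v ≤ c := by
  have hφ' : ∀ t, sqnorm n (x t) ≤ r →
      eval (x t) (∑ i, pderiv i v * P i) ≤ -(ε * sqnorm n (x t)) := fun t h => by
    simpa [le_neg] using hdecr (x t) h
  refine image_le_of_deriv_nonpos_of_deriv_neg_boundary (ρ := fun t => sqnorm n (x t)) (r := r)
    (fun t ht => hasDerivAt_eval_of_hasDerivAt (hx t ht) v)
    (continuous_sqnorm.comp_continuousOn fun t ht => (hx t ht).continuousAt.continuousWithinAt)
    (fun t _ h => hc _ h) (fun t _ h => ?_) (fun t _ h => ?_) h0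
  · nlinarith [hφ' t h, sqnorm_nonneg (x t)]
  · nlinarith [hφ' t h.le]

theorem field_eval_zero_eq_zero (hε : 0 < ε) (hr : 0 < r)
    (hdecr : ∀ x, sqnorm n x ≤ r → ε * sqnorm n x ≤ eval x (-(∑ i, pderiv i v * P i)))
    (hmin : ∀ y, eval 0 v ≤ eval y v)
    (hsub : ∀ y, eval y v ≤ eval 0 v → sqnorm n y ≤ r) (i : Fin n) : eval 0 (P i) = 0 := by
  set F : (Fin n → ℝ) → Fin n → ℝ := fun y i => eval y (P i)
  have hF : ContDiffAt ℝ 1 F 0 := (analyticAt_pi_iff.2 fun i =>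
    AnalyticOnNhd.eval_mvPolynomial (P i) 0 (mem_univ _)).contDiffAt
  obtain ⟨α, hα0, a, ha, hα⟩ :=
    hF.exists_forall_mem_closedBall_exists_eq_forall_mem_Ioo_hasDerivAt₀ 0
  have hαI : ∀ t ∈ Icc 0 (a / 2), HasDerivAt α (F (α t)) t := fun t ht =>
    hα t ⟨by linarith [ht.1], by linarith [ht.2]⟩
  have hzero : ∀ t ∈ Icc 0 (a / 2), α t = 0 := fun t ht => by
    have hle := eval_comp_le_of_sublevel_subset_ball hε hr hdecr hsub hαI (by rw [hα0]) t ht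
    exact eq_zero_of_forall_eval_le hε hdecr (fun y => hle.trans (hmin y)) (hsub _ hle)
  have hmid : a / 4 ∈ Icc 0 (a / 2) := ⟨by positivity, by linarith⟩
  have hconst : HasDerivAt α 0 (a / 4) := (hasDerivAt_const _ 0).congr_of_eventuallyEq <| by
    filter_upwards [Icc_mem_nhds (by linarith : 0 < a / 4) (by linarith : a / 4 < a / 2)]
      with t ht using hzero t ht
  have hF0 := (hαI _ hmid).unique hconst
  rw [hzero _ hmid] at hF0
  exact congrFun hF0 i

theorem exists_sqnorm_le_mul_exp (hε : 0 < ε)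
    (hdecr : ∀ x, sqnorm n x ≤ r → ε * sqnorm n x ≤ eval x (-(∑ i, pderiv i v * P i)))
    (hmin : ∀ y, eval 0 v ≤ eval y v) (hf0 : ∀ i, eval 0 (P i) = 0) :
    ∃ A δ : ℝ, 0 < A ∧ 0 < δ ∧ ∀ x : ℝ → Fin n → ℝ,
      (∀ t ≥ 0, HasDerivAt x (fun i => eval (x t) (P i)) t) → (∀ t ≥ 0, sqnorm n (x t) ≤ r) →
      ∀ t ≥ 0, sqnorm n (x t) ≤ A * sqnorm n (x 0) * Real.exp (-δ * t) := by
  obtain ⟨β, hβ, hvβ⟩ :=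
    exists_abs_eval_sub_le_mul_sqnorm (fun i => eval_pderiv_eq_zero_of_forall_le hmin i) r
  obtain ⟨L, hL, hfL⟩ := exists_abs_eval_le_mul_sqnorm hf0 r
  obtain ⟨A, δ, hA, hδ, hdecay⟩ := exists_le_mul_exp_of_lyapunov hε hβ (mul_nonneg zero_le_two hL)
  refine ⟨A, δ, hA, hδ, fun x hx hball => hdecay
    (U := fun t => eval (x t) v - eval 0 v) (ρ := fun t => sqnorm n (x t))
    (fun t ht => (hasDerivAt_eval_of_hasDerivAt (hx t ht) v).sub_const _)
    (fun t ht => hasDerivAt_sqnorm_comp (hx t ht))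
    (fun t ht => ⟨sub_nonneg.2 (hmin _), (le_abs_self _).trans (hvβ _ (hball t ht))⟩)
    (fun t _ => sqnorm_nonneg _) (fun t ht => ?_) (fun t ht => ?_)⟩
  · simpa [le_neg] using hdecr _ (hball t ht)
  · have h := (le_abs_self _).trans (hfL _ (hball t ht))
    simp only [map_sum, map_mul, eval_X] at h
    rw [mul_assoc]
    exact mul_le_mul_of_nonneg_left h zero_le_two

end Lyapunov

theorem sos_implies_exponential_stability_general (n : ℕ)
    (P : Fin n → MvPolynomial (Fin n) ℝ)
    (v : MvPolynomial (Fin n) ℝ) (ε r : ℝ) (hε : 0 < ε) (hr : 0 < r)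
    (t₁ t₂ : MvPolynomial (Fin n) ℝ)
    (ht₁ : IsSOS t₁) (ht₂ : IsSOS t₂)
    (h2 : -(∑ i, MvPolynomial.pderiv i v * P i) -
      t₁ * (MvPolynomial.C r - qpoly n) - t₂ - MvPolynomial.C ε * qpoly n = 0) :
    ∃ μ δ : ℝ, 0 < μ ∧ 0 < δ ∧
      ∀ x : ℝ → (Fin n → ℝ),
        (∀ t ≥ (0:ℝ), HasDerivAt x (fun i => MvPolynomial.eval (x t) (P i)) t) →
        x 0 ∈ YSet n v r →
        ∀ t ≥ (0:ℝ), enorm2 n (x t) ≤ μ * enorm2 n (x 0) * Real.exp (-δ * t) := by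
  rcases (YSet n v r).eq_empty_or_nonempty with hY | ⟨z, c, hc, hz⟩
  · exact ⟨1, 1, one_pos, one_pos, fun x _ hx0 => absurd hx0 (hY ▸ notMem_empty _)⟩
  have hdecr : ∀ x, sqnorm n x ≤ r → ε * sqnorm n x ≤ eval x (-(∑ i, pderiv i v * P i)) :=
    fun x hx => mul_sqnorm_le_eval_of_sos ht₁ ht₂ h2 hx
  have hmin := eval_zero_le_of_sublevel_subset_ball hε hdecr hc hz
  have hsub : ∀ y, eval y v ≤ eval 0 v → sqnorm n y ≤ r :=
    fun y hy => hc y (hy.trans ((hmin z).trans hz))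
  obtain ⟨A, δ, hA, hδ, hdecay⟩ := exists_sqnorm_le_mul_exp hε hdecr hmin
    (field_eval_zero_eq_zero hε hr hdecr hmin hsub)
  refine ⟨√A, δ / 2, Real.sqrt_pos.2 hA, by positivity, fun x hx ⟨c', hc', hx0⟩ t ht => ?_⟩
  have hball : ∀ s ≥ 0, sqnorm n (x s) ≤ r := fun s hs => hc' _ <|
    eval_comp_le_of_sublevel_subset_ball hε hr hdecr hc' (fun u hu => hx u hu.1) hx0 s ⟨hs, le_rfl⟩
  exact enorm2_le_of_sqnorm_le hA.le (hdecay x hx hball t ht)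

/-- consider `ẋ = f(x)` with a polynomial vector field
`f_i(x) = eval x (P i)`.  Suppose there are a polynomial `v`, a constant `ε > 0`,
a radius `r > 0`, and sum-of-squares polynomials `s₁, s₂, t₁, t₂` with
`v − s₁·(r − xᵀx) − s₂ − ε·xᵀx = 0` and
`−∇vᵀf − t₁·(r − xᵀx) − t₂ − ε·xᵀx = 0` identically.  Then there are constants
`μ, δ > 0` such that every solution with initial condition in `Y(v,r)`, the
largest sublevel set of `v` contained in `{x : xᵀx ≤ r}`, satisfies
`‖x(t)‖₂ ≤ μ‖x₀‖₂ e^{−δt}` for all `t ≥ 0`. -/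
theorem sos_implies_exponential_stability (n : ℕ)
    (P : Fin n → MvPolynomial (Fin n) ℝ)
    (v : MvPolynomial (Fin n) ℝ) (ε r : ℝ) (hε : 0 < ε) (hr : 0 < r)
    (s₁ s₂ t₁ t₂ : MvPolynomial (Fin n) ℝ)
    (hs₁ : IsSOS s₁) (hs₂ : IsSOS s₂) (ht₁ : IsSOS t₁) (ht₂ : IsSOS t₂)
    (h1 : v - s₁ * (MvPolynomial.C r - qpoly n) - s₂ -
      MvPolynomial.C ε * qpoly n = 0)
    (h2 : -(∑ i, MvPolynomial.pderiv i v * P i) -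
      t₁ * (MvPolynomial.C r - qpoly n) - t₂ - MvPolynomial.C ε * qpoly n = 0) :
    ∃ μ δ : ℝ, 0 < μ ∧ 0 < δ ∧
      ∀ x : ℝ → (Fin n → ℝ),
        (∀ t ≥ (0:ℝ), HasDerivAt x (fun i => MvPolynomial.eval (x t) (P i)) t) →
        x 0 ∈ YSet n v r →
        ∀ t ≥ (0:ℝ), enorm2 n (x t) ≤ μ * enorm2 n (x 0) * Real.exp (-δ * t) :=
  sos_implies_exponential_stability_general n P v ε r hε hr t₁ t₂ ht₁ ht₂ h2
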